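/- arXiv:1603.07884 — 3 statements merged into one kernel-verified Lean document; each statement's English description precedes it below -/
import Mathlib

section
/- For integers n and k with 1 ≤ k and 2k ≤ n, q^k · ([n]_q / [n-k]_q) · [n-k choose k]_q = q^k [n-k choose k]_q + q^n [n-k-1 choose k-1]_q. -/
/-! Write `n = m + k`. The q-integers split as `[m + k] = [m] + q^m [k]`, and the q-analogue of
`m * C(m-1, k-1) = k * C(m, k)` expresses the second binomial on the right through the first;
the identity then reduces to the splitting. For `‖q‖ < 1` no `[j]` with `j ≥ 1` vanishes,
which is what the divisions need. -/

/-- q-integer [n]_q = (1-q^n)/(1-q). -/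
noncomputable def qint (q : ℂ) (n : ℕ) : ℂ := (1 - q ^ n) / (1 - q)

/-- q-factorial [n]_q!. -/
noncomputable def qfact (q : ℂ) (n : ℕ) : ℂ := ∏ i ∈ Finset.range n, qint q (i + 1)

/-- Gaussian (q-binomial) coefficient, 0 for k > n. -/
noncomputable def qbinom (q : ℂ) (n k : ℕ) : ℂ :=
  if k ≤ n then qfact q n / (qfact q (n - k) * qfact q k) else 0

/-- q-shifted factorial (x;q)_n. -/
noncomputable def qpoch (x q : ℂ) (n : ℕ) : ℂ := ∏ i ∈ Finset.range n, (1 - q ^ i * x)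

theorem qint_add (q : ℂ) (m k : ℕ) : qint q (m + k) = qint q m + q ^ m * qint q k := by
  simp only [qint]
  ring

theorem qint_ne_zero_of_norm_lt_one {q : ℂ} (hq : ‖q‖ < 1) {n : ℕ} (hn : n ≠ 0) :
    qint q n ≠ 0 := by
  have one_sub_pow_ne_zero (j : ℕ) (hj : j ≠ 0) : 1 - q ^ j ≠ 0 := by
    refine sub_ne_zero.mpr fun h => ?_
    have : ‖q ^ j‖ < 1 := by rw [norm_pow]; exact pow_lt_one₀ (norm_nonneg q) hq hj
    simp [← h] at this
  exact div_ne_zero (one_sub_pow_ne_zero n hn) (by simpa using one_sub_pow_ne_zero 1 one_ne_zero)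

theorem qfact_succ (q : ℂ) (n : ℕ) : qfact q (n + 1) = qfact q n * qint q (n + 1) :=
  Finset.prod_range_succ _ _

theorem qint_succ_mul_qbinom {q : ℂ} (m k : ℕ) (hk : qint q (k + 1) ≠ 0) :
    qint q (m + 1) * qbinom q m k = qbinom q (m + 1) (k + 1) * qint q (k + 1) := by
  by_cases hkm : k ≤ m
  · rw [qbinom, qbinom, if_pos hkm, if_pos (by omega), Nat.add_sub_add_right, qfact_succ,
      qfact_succ]
    field_simp
  · rw [qbinom, qbinom, if_neg hkm, if_neg (by omega), mul_zero, zero_mul]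

theorem qbinom_ratio_identity'_general (q : ℂ) (hq1 : ‖q‖ < 1)
    (n k : ℕ) (hk : 1 ≤ k) (hkn : 2 * k ≤ n) :
    q ^ k * (qint q n / qint q (n - k)) * qbinom q (n - k) k =
      q ^ k * qbinom q (n - k) k + q ^ n * qbinom q (n - k - 1) (k - 1) := by
  obtain ⟨k, rfl⟩ : ∃ k', k = k' + 1 := ⟨k - 1, by omega⟩
  obtain ⟨m, rfl⟩ : ∃ m, n = m + 1 + (k + 1) := ⟨n - (k + 1) - 1, by omega⟩
  have hm := qint_ne_zero_of_norm_lt_one hq1 (Nat.succ_ne_zero m)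
  have habs := qint_succ_mul_qbinom m k (qint_ne_zero_of_norm_lt_one hq1 (Nat.succ_ne_zero k))
  simp only [Nat.add_sub_cancel, qint_add q (m + 1) (k + 1)]
  field_simp
  linear_combination -q ^ (m + 1 + (k + 1)) * habs

theorem qbinom_ratio_identity' (q : ℂ) (hq0 : 0 < ‖q‖) (hq1 : ‖q‖ < 1)
    (n k : ℕ) (hk : 1 ≤ k) (hkn : 2 * k ≤ n) :
    q ^ k * (qint q n / qint q (n - k)) * qbinom q (n - k) k =
      q ^ k * qbinom q (n - k) k + q ^ n * qbinom q (n - k - 1) (k - 1) :=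
  qbinom_ratio_identity'_general q hq1 n k hk hkn
end

section
/- For 0 ≤ k ≤ (n+1)/2, the incomplete q-Chebyshev polynomials satisfy T_{n+2}^k(x,s,q) = x U_{n+1}^k(x,s,q) + q^{n+1} s U_n^{k-1}(x,s,q). -/
/-- Partial sum defining incomplete q-Chebyshev polynomials of the second kind:
`Usum x s q n (k+1)` is U_n^k(x,s,q), and `Usum x s q n 0 = 0` is the empty sum (k = -1). -/
noncomputable def Usum (x s q : ℂ) (n m : ℕ) : ℂ :=
  ∑ j ∈ Finset.range m,
    q ^ (j ^ 2) * qbinom q (n - j) j * (qpoch (-q) q (n - j) / qpoch (-q) q j) *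
      s ^ j * x ^ (n - 2 * j)

/-- Partial sum defining incomplete q-Chebyshev polynomials of the first kind:
`Tsum x s q n (k+1)` is T_n^k(x,s,q). -/
noncomputable def Tsum (x s q : ℂ) (n m : ℕ) : ℂ :=
  ∑ j ∈ Finset.range m,
    q ^ (j ^ 2) * (qint q n / qint q (n - j)) * qbinom q (n - j) j *
      (qpoch (-q) q (n - j - 1) / qpoch (-q) q j) * s ^ j * x ^ (n - 2 * j)

/-!
The identity holds term by term: the `j`-th term of `T_{n+2}` is `x` times the `j`-th term of
`U_{n+1}` plus `q^{n+1} s` times the `(j-1)`-th term of `U_n`. Since `(-q;q)_j = (-q;q)_{j-1}(1+q^j)`,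
cancelling the common factors leaves
`[N]/[N-j] [N-j choose j] = [N-j-1 choose j] + q^{N-2j} (1+q^j) [N-j-1 choose j-1]` with `N = n+2`,
which follows from `[N] = [N-2j] + q^{N-2j} (1+q^j) [j]` once the q-binomials are written as
quotients of q-factorials.
-/

namespace QChebyshev

noncomputable def Uterm (x s q : ℂ) (n j : ℕ) : ℂ :=
  q ^ (j ^ 2) * qbinom q (n - j) j * (qpoch (-q) q (n - j) / qpoch (-q) q j) *
    s ^ j * x ^ (n - 2 * j)

noncomputable def Tterm (x s q : ℂ) (n j : ℕ) : ℂ :=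
  q ^ (j ^ 2) * (qint q n / qint q (n - j)) * qbinom q (n - j) j *
    (qpoch (-q) q (n - j - 1) / qpoch (-q) q j) * s ^ j * x ^ (n - 2 * j)

variable {q : ℂ}

lemma Usum_eq_sum_Uterm (x s : ℂ) (n m : ℕ) :
    Usum x s q n m = ∑ j ∈ Finset.range m, Uterm x s q n j := rfl

lemma Tsum_eq_sum_Tterm (x s : ℂ) (n m : ℕ) :
    Tsum x s q n m = ∑ j ∈ Finset.range m, Tterm x s q n j := rfl

lemma pow_ne_of_norm_lt_one_of_norm_eq_one (hq : ‖q‖ < 1) {u : ℂ} (hu : ‖u‖ = 1) {m : ℕ}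
    (hm : m ≠ 0) : q ^ m ≠ u := by
  intro h
  have : ‖q ^ m‖ < 1 := norm_pow q m ▸ pow_lt_one₀ (norm_nonneg q) hq hm
  rw [h, hu] at this
  exact this.false

lemma qint_ne_zero (hq : ‖q‖ < 1) {m : ℕ} (hm : m ≠ 0) : qint q m ≠ 0 := by
  have hqm := pow_ne_of_norm_lt_one_of_norm_eq_one hq norm_one hm
  have hq1 := pow_ne_of_norm_lt_one_of_norm_eq_one hq norm_one one_ne_zero
  rw [pow_one] at hq1
  exact div_ne_zero (sub_ne_zero.2 hqm.symm) (sub_ne_zero.2 hq1.symm)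

lemma qfact_ne_zero (hq : ‖q‖ < 1) (m : ℕ) : qfact q m ≠ 0 :=
  Finset.prod_ne_zero_iff.2 fun i _ => qint_ne_zero hq i.succ_ne_zero

lemma one_add_pow_ne_zero (hq : ‖q‖ < 1) {m : ℕ} (hm : m ≠ 0) : 1 + q ^ m ≠ 0 := by
  rw [add_comm, ← sub_neg_eq_add]
  exact sub_ne_zero.2 (pow_ne_of_norm_lt_one_of_norm_eq_one hq (by simp) hm)

lemma qpoch_neg_succ (m : ℕ) : qpoch (-q) q (m + 1) = qpoch (-q) q m * (1 + q ^ (m + 1)) := by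
  rw [qpoch, Finset.prod_range_succ, ← qpoch]
  ring

lemma qpoch_neg_ne_zero (hq : ‖q‖ < 1) (m : ℕ) : qpoch (-q) q m ≠ 0 := by
  induction m with
  | zero => simp [qpoch]
  | succ m ih => rw [qpoch_neg_succ]; exact mul_ne_zero ih (one_add_pow_ne_zero hq m.succ_ne_zero)

lemma qint_add (a b : ℕ) : qint q (a + b) = qint q a + q ^ a * qint q b := by
  simp only [qint]
  ring

lemma qfact_succ (m : ℕ) : qfact q (m + 1) = qfact q m * qint q (m + 1) :=
  Finset.prod_range_succ _ m

lemma qbinom_add (a b : ℕ) : qbinom q (a + b) b = qfact q (a + b) / (qfact q a * qfact q b) := by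
  rw [qbinom, if_pos (Nat.le_add_left b a), Nat.add_sub_cancel]

/-- A q-analogue of `N / (N - j) * C(N - j, j) = C(N - j - 1, j) + 2 C(N - j - 1, j - 1)`, written
with `N = a + 2b + 3` and `j = b + 1`. -/
lemma qint_div_mul_qbinom (hq : ‖q‖ < 1) (a b : ℕ) :
    qint q (a + 2 * b + 3) / qint q (a + b + 2) * qbinom q (a + b + 2) (b + 1) =
      qbinom q (a + b + 1) (b + 1) + q ^ (a + 1) * (1 + q ^ (b + 1)) * qbinom q (a + b + 1) b := by
  have hN : qint q (a + 2 * b + 3) =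
      qint q (a + 1) + q ^ (a + 1) * (1 + q ^ (b + 1)) * qint q (b + 1) := by
    rw [show a + 2 * b + 3 = (a + 1) + (b + 1) + (b + 1) by ring, qint_add, qint_add, qint_add]
    ring
  rw [show a + b + 2 = (a + 1) + (b + 1) by ring, show a + b + 1 = a + (b + 1) by ring,
    qbinom_add, qbinom_add, show a + (b + 1) = (a + 1) + b by ring, qbinom_add, hN,
    show a + 1 + (b + 1) = (a + 1 + b) + 1 by ring, qfact_succ (a + 1 + b), qfact_succ a,
    qfact_succ b]
  have := qfact_ne_zero hq
  have := qint_ne_zero hq (m := a + 1 + b + 1) (by omega)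
  have := qint_ne_zero hq (m := a + 1) (by omega)
  have := qint_ne_zero hq (m := b + 1) (by omega)
  field_simp

lemma qbinom_zero (hq : ‖q‖ < 1) (m : ℕ) : qbinom q m 0 = 1 := by
  rw [qbinom, if_pos m.zero_le, Nat.sub_zero, show qfact q 0 = 1 from Finset.prod_range_zero _,
    mul_one, div_self (qfact_ne_zero hq m)]

lemma Tterm_zero (hq : ‖q‖ < 1) (x s : ℂ) (n : ℕ) :
    Tterm x s q (n + 2) 0 = x * Uterm x s q (n + 1) 0 := by
  simp only [Tterm, Uterm, Nat.sub_zero, mul_zero, show n + 2 - 1 = n + 1 from rfl,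
    div_self (qint_ne_zero hq (n + 1).succ_ne_zero), qbinom_zero hq]
  ring

lemma Tterm_succ (hq : ‖q‖ < 1) (x s : ℂ) {n j : ℕ} (hj : 2 * j + 1 ≤ n) :
    Tterm x s q (n + 2) (j + 1) =
      x * Uterm x s q (n + 1) (j + 1) + q ^ (n + 1) * s * Uterm x s q n j := by
  obtain ⟨a, rfl⟩ : ∃ a, n = a + 2 * j + 1 := ⟨n - 2 * j - 1, by omega⟩
  have hkey := qint_div_mul_qbinom hq a j
  simp only [Tterm, Uterm, show a + 2 * j + 1 + 2 = a + 2 * j + 3 by ring,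
    show a + 2 * j + 3 - (j + 1) = a + j + 2 by omega, show a + j + 2 - 1 = a + j + 1 by omega,
    show a + 2 * j + 3 - 2 * (j + 1) = a + 1 by omega,
    show a + 2 * j + 1 + 1 - (j + 1) = a + j + 1 by omega,
    show a + 2 * j + 1 + 1 - 2 * (j + 1) = a by omega,
    show a + 2 * j + 1 - j = a + j + 1 by omega, show a + 2 * j + 1 - 2 * j = a + 1 by omega,
    qpoch_neg_succ j]
  have := qpoch_neg_ne_zero hq j
  have := one_add_pow_ne_zero hq j.succ_ne_zero
  rw [mul_assoc (q ^ _), hkey]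
  field_simp
  ring

end QChebyshev

open QChebyshev in
theorem Tinc_eq_Uinc_general (q : ℂ) (hq1 : ‖q‖ < 1)
    (x s : ℂ) (n k : ℕ) (hk : 2 * k ≤ n + 1) :
    Tsum x s q (n + 2) (k + 1) =
      x * Usum x s q (n + 1) (k + 1) + q ^ (n + 1) * s * Usum x s q n k := by
  rw [Tsum_eq_sum_Tterm, Usum_eq_sum_Uterm, Usum_eq_sum_Uterm, Finset.sum_range_succ',
    Finset.sum_range_succ', Tterm_zero hq1, mul_add, Finset.mul_sum, Finset.mul_sum,
    add_right_comm, ← Finset.sum_add_distrib]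
  congr 1
  refine Finset.sum_congr rfl fun j hj => Tterm_succ hq1 x s ?_
  have := Finset.mem_range.1 hj
  omega

theorem Tinc_eq_Uinc (q : ℂ) (hq0 : 0 < ‖q‖) (hq1 : ‖q‖ < 1)
    (x s : ℂ) (n k : ℕ) (hk : 2 * k ≤ n + 1) :
    Tsum x s q (n + 2) (k + 1) =
      x * Usum x s q (n + 1) (k + 1) + q ^ (n + 1) * s * Usum x s q n k :=
  Tinc_eq_Uinc_general q hq1 x s n k hk
end

section
/- For n ≥ 1, the sum of the incomplete q-Chebyshev polynomials of the first kind over all valid truncation indices satisfies Σ_{k=0}^{⌊n/2⌋} T_n^k(x,s,q) = (⌊n/2⌋ − n/2 + 1) T_n(x,s,q) + (x/2) (d/dx) T_n(x,s,q). -/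
/-- Truncated q-Chebyshev polynomial of the first kind, as a polynomial in x:
`TP s q n (k+1)` is T_n^k, and `TP s q n (n/2+1)` is the full polynomial T_n. -/
noncomputable def TP (s q : ℂ) (n m : ℕ) : Polynomial ℂ :=
  ∑ j ∈ Finset.range m,
    Polynomial.C (q ^ (j ^ 2) * (qint q n / qint q (n - j)) * qbinom q (n - j) j *
      (qpoch (-q) q (n - j - 1) / qpoch (-q) q j) * s ^ j) * Polynomial.X ^ (n - 2 * j)

/-! The identity uses only the shape `∑ⱼ cⱼ x^(n-2j)` of `T_n`, not its coefficients: summing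
the truncations `T_n^0, …, T_n^m` (with `m = ⌊n/2⌋`) counts the `j`-th term `m + 1 - j` times,
while the Euler operator `x d/dx` multiplies it by its degree `n - 2j`, and
`m + 1 - j = (m - n/2 + 1) + (n - 2j)/2`. -/

open Polynomial Finset

theorem Finset.sum_range_succ_sum_range_succ {M : Type*} [AddCommMonoid M] (f : ℕ → M) (m : ℕ) :
    ∑ k ∈ range (m + 1), ∑ j ∈ range (k + 1), f j = ∑ j ∈ range (m + 1), (m + 1 - j) • f j := by
  induction m with
  | zero => simp
  | succ m ih =>
    rw [sum_range_succ (fun k => ∑ j ∈ range (k + 1), f j), ih, sum_range_succ f,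
      sum_range_succ (fun j => (m + 1 + 1 - j) • f j), ← add_assoc, ← sum_add_distrib]
    congr 1
    · refine sum_congr rfl fun j hj => ?_
      rw [← succ_nsmul, Nat.sub_add_comm (mem_range.mp hj).le]
    · simp

theorem Polynomial.X_mul_derivative_C_mul_X_pow {R : Type*} [CommSemiring R] (a : R) (d : ℕ) :
    X * derivative (C a * X ^ d) = C (d : R) * (C a * X ^ d) := by
  rcases d with _ | d
  · simp
  · rw [derivative_C_mul_X_pow]
    push_cast
    simp only [C_mul, C_add, C_1]
    ring

theorem Polynomial.sum_range_partialSum_C_mul_X_pow_sub_two_mul {K : Type*} [Field K]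
    [NeZero (2 : K)] (c : ℕ → K) {n m : ℕ} (hm : 2 * m ≤ n) :
    ∑ k ∈ range (m + 1), ∑ j ∈ range (k + 1), C (c j) * X ^ (n - 2 * j) =
      C ((m : K) - n / 2 + 1) * ∑ j ∈ range (m + 1), C (c j) * X ^ (n - 2 * j) +
        C (1 / 2) * (X * derivative (∑ j ∈ range (m + 1), C (c j) * X ^ (n - 2 * j))) := by
  rw [sum_range_succ_sum_range_succ, derivative_sum, mul_sum, mul_sum, mul_sum,
    ← sum_add_distrib]
  refine sum_congr rfl fun j hj => ?_
  have hjm : j ≤ m := Nat.lt_succ_iff.mp (mem_range.mp hj)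
  have hcoeff :
      ((m + 1 - j : ℕ) : K) = ((m : K) - n / 2 + 1) + 1 / 2 * ((n - 2 * j : ℕ) : K) := by
    rw [Nat.cast_sub (by omega), Nat.cast_sub (by omega)]
    field_simp
    push_cast
    ring
  rw [X_mul_derivative_C_mul_X_pow, nsmul_eq_mul, ← C_eq_natCast, hcoeff, C_add, C_mul]
  ring

theorem sum_Tinc_general (q : ℂ)
    (s : ℂ) (n : ℕ) :
    ∑ k ∈ Finset.range (n / 2 + 1), TP s q n (k + 1) =
      Polynomial.C (((n / 2 : ℕ) : ℂ) - (n : ℂ) / 2 + 1) * TP s q n (n / 2 + 1) +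
        Polynomial.C (1 / 2) *
          (Polynomial.X * Polynomial.derivative (TP s q n (n / 2 + 1))) :=
  sum_range_partialSum_C_mul_X_pow_sub_two_mul _ (Nat.mul_div_le n 2)

theorem sum_Tinc (q : ℂ) (hq0 : 0 < ‖q‖) (hq1 : ‖q‖ < 1)
    (s : ℂ) (n : ℕ) (hn : 1 ≤ n) :
    ∑ k ∈ Finset.range (n / 2 + 1), TP s q n (k + 1) =
      Polynomial.C (((n / 2 : ℕ) : ℂ) - (n : ℂ) / 2 + 1) * TP s q n (n / 2 + 1) +
        Polynomial.C (1 / 2) *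
          (Polynomial.X * Polynomial.derivative (TP s q n (n / 2 + 1))) :=
  sum_Tinc_general q s n
end
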